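/- Let 𝒟 be an abstract domain and u a minterm over P^𝒟. If u is not 2-reduced, then ⟦u⟧ = ∅. Consequently, for every set S of minterms, ⟦S⟧ = ⟦{u ∈ S : u is 2-reduced}⟧. -/

import Mathlib

/-- A bound `(k, ≺)`: an integer `k` together with a strictness flag
(`true` codes `≤`, `false` codes `<`), ordered lexicographically,
so that `(k, <) < (k, ≤) < (k+1, <)`. -/
abbrev Bnd : Type := Lex (ℤ × Bool)

/-- Addition of bounds: `(k,≺) + (k',≺')` is `(k+k', ≺'')` where `≺''` is `≤`
iff both `≺` and `≺'` are `≤`. -/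
instance : Add Bnd :=
  ⟨fun a b => toLex ((ofLex a).1 + (ofLex b).1, (ofLex a).2 && (ofLex b).2)⟩

/-- The zero bound is `(0, ≤)`. -/
instance : Zero Bnd := ⟨toLex (0, true)⟩

instance : AddCommMonoid Bnd where
  add a b := toLex ((ofLex a).1 + (ofLex b).1, (ofLex a).2 && (ofLex b).2)
  zero := toLex (0, true)
  nsmul := nsmulRec
  add_assoc a b c := by
    change toLex (((ofLex a).1 + (ofLex b).1) + (ofLex c).1,
        (((ofLex a).2 && (ofLex b).2) && (ofLex c).2)) =
      toLex ((ofLex a).1 + ((ofLex b).1 + (ofLex c).1),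
        ((ofLex a).2 && ((ofLex b).2 && (ofLex c).2)))
    rw [add_assoc, Bool.and_assoc]
  zero_add a := by
    change toLex ((0 : ℤ) + (ofLex a).1, (true && (ofLex a).2)) = a
    simp
  add_zero a := by
    change toLex ((ofLex a).1 + (0 : ℤ), ((ofLex a).2 && true)) = a
    simp
  add_comm a b := by
    change toLex ((ofLex a).1 + (ofLex b).1, ((ofLex a).2 && (ofLex b).2)) =
      toLex ((ofLex b).1 + (ofLex a).1, ((ofLex b).2 && (ofLex a).2))
    rw [add_comm, Bool.and_comm]

/-- `satB d b` says that `d ≺ k`, where `b = (k, ≺)`. -/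
def satB (d : ℝ) (b : Bnd) : Prop :=
  if (ofLex b).2 then d ≤ ((ofLex b).1 : ℝ) else d < ((ofLex b).1 : ℝ)


/-- The inverse of a bound: the inverse of `(k, ≺)` is `(−k, ≺⁻¹)`, where
`≤⁻¹ = <` and `<⁻¹ = ≤`. -/
def bndInv (b : Bnd) : Bnd := toLex (-(ofLex b).1, !(ofLex b).2)

variable {C : Type*}

/-- Extended valuation on `C0 = C ∪ {0}`: the special clock `0` is `none`. -/
def val0 (v : C → ℝ) : Option C → ℝ := fun x => x.elim 0 v

/-- An abstract domain assigns a finite set of bounds to each ordered pair of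
clocks in `C0 = C ∪ {0}`. -/
abbrev AbsDom (C : Type*) := Option C → Option C → Finset Bnd

/-- The symmetry requirement on abstract domains:
`𝒟_{y,x} = {(−k, ≺⁻¹) : (k, ≺) ∈ 𝒟_{x,y}}`. -/
def DomSym (𝒟 : AbsDom C) : Prop := ∀ x y, 𝒟 y x = (𝒟 x y).image bndInv

variable [LinearOrder (Option C)]

/-- The predicate set `P^𝒟`: one variable `p_{x−y≺k}` for each pair `x ⊏ y`
(in the fixed total order on `C0`) and each bound `(k, ≺) ∈ 𝒟_{x,y}`. -/
abbrev Pred (𝒟 : AbsDom C) :=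
  {p : Option C × Option C × Bnd // p.1 < p.2.1 ∧ p.2.2 ∈ 𝒟 p.1 p.2.1}

/-- A minterm: a Boolean valuation of the predicate set. -/
abbrev Minterm (𝒟 : AbsDom C) := Pred 𝒟 → Bool

/-- The semantics of a minterm: the set of (nonnegative) clock valuations
satisfying exactly the constraints prescribed by the minterm. -/
def mtSem (𝒟 : AbsDom C) (u : Minterm 𝒟) : Set (C → ℝ) :=
  {v | (∀ c, 0 ≤ v c) ∧
    ∀ p : Pred 𝒟, (satB (val0 v p.1.1 - val0 v p.1.2.1) p.1.2.2 ↔ u p = true)}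

/-- The semantics of a set of minterms. -/
def setSem (𝒟 : AbsDom C) (S : Set (Minterm 𝒟)) : Set (C → ℝ) :=
  ⋃ u ∈ S, mtSem 𝒟 u

/-- The abstraction function `α_𝒟` maps a set `Z` of valuations to the set of
minterms whose semantics meets `Z`. -/
def absF (𝒟 : AbsDom C) (Z : Set (C → ℝ)) : Set (Minterm 𝒟) :=
  {u | (mtSem 𝒟 u ∩ Z).Nonempty}

/-- The literal value `u⟦x−y≺k⟧`: the value of the predicate `p_{x−y≺k}` if
`x ⊏ y`, and the negation of the value of `p_{y−x≺⁻¹−k}` if `y ⊏ x`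
(if `x = y` the literal is the truth value of the constraint `0 ≺ k`). -/
def litVal (𝒟 : AbsDom C) (u : Minterm 𝒟) (x y : Option C) (b : Bnd) : Bool :=
  if h : x < y ∧ b ∈ 𝒟 x y then u ⟨(x, y, b), h⟩
  else if h : y < x ∧ bndInv b ∈ 𝒟 y x then !(u ⟨(y, x, bndInv b), h⟩)
  else decide ((0 : Bnd) ≤ b)

/-- A minterm is 2-reduced if no contradiction can be obtained from it via
paths of length at most 2: any constraint implied by a single stronger
asserted constraint, or by the sum of two asserted constraints, is asserted. -/
def TwoReduced (𝒟 : AbsDom C) (u : Minterm 𝒟) : Prop :=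
  ∀ x y : Option C, ∀ b ∈ 𝒟 x y,
    ((∃ b' ∈ 𝒟 x y, b' ≤ b ∧ litVal 𝒟 u x y b' = true) ∨
      (∃ z : Option C, ∃ b₁ ∈ 𝒟 x z, ∃ b₂ ∈ 𝒟 z y,
        b₁ + b₂ ≤ b ∧ litVal 𝒟 u x z b₁ = true ∧ litVal 𝒟 u z y b₂ = true)) →
    litVal 𝒟 u x y b = true

/-!
A valuation in `⟦u⟧` makes every literal `u⟦x−y≺k⟧` true exactly when `v(x) − v(y) ≺ k`
(for `y ⊏ x` because `v(y) − v(x) ≺⁻¹ −k` is the negation of `v(x) − v(y) ≺ k`, and for `x = y`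
because the literal is then `0 ≺ k`). Both closure rules of 2-reducedness are sound for
difference constraints: `d ≺ l` with `(l,≺) ≤ (k,≺')` gives `d ≺' k`, and bounds on
`v(x) − v(z)` and `v(z) − v(y)` add up to a bound on `v(x) − v(y)`. Hence any minterm with a
nonempty semantics is 2-reduced.
-/

lemma satB_toLex {d : ℝ} {k : ℤ} {s : Bool} :
    satB d (toLex (k, s)) ↔ if s then d ≤ k else d < k :=
  Iff.rfl

lemma satB_mono {d : ℝ} {b b' : Bnd} (h : b' ≤ b) (hs : satB d b') : satB d b := by
  obtain ⟨⟨k', s'⟩, rfl⟩ := toLex.surjective b'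
  obtain ⟨⟨k, s⟩, rfl⟩ := toLex.surjective b
  rw [satB_toLex] at hs ⊢
  rcases Prod.Lex.le_iff.mp h with hk | ⟨rfl, hs'⟩
  · have hk : (k' : ℝ) + 1 ≤ k := by exact_mod_cast hk
    cases s' <;> cases s <;> simp only [Bool.false_eq_true, ite_true, ite_false] at hs ⊢ <;>
      linarith
  · cases s' <;> cases s <;> simp_all [le_of_lt, Bool.le_iff_imp]

lemma satB_add {d₁ d₂ : ℝ} {b₁ b₂ : Bnd} (h₁ : satB d₁ b₁) (h₂ : satB d₂ b₂) :
    satB (d₁ + d₂) (b₁ + b₂) := by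
  obtain ⟨⟨k₁, s₁⟩, rfl⟩ := toLex.surjective b₁
  obtain ⟨⟨k₂, s₂⟩, rfl⟩ := toLex.surjective b₂
  change satB (d₁ + d₂) (toLex (k₁ + k₂, s₁ && s₂))
  rw [satB_toLex] at h₁ h₂ ⊢
  push_cast
  cases s₁ <;> cases s₂ <;> simp_all <;> linarith

lemma satB_zero_iff {b : Bnd} : satB 0 b ↔ 0 ≤ b := by
  obtain ⟨⟨k, s⟩, rfl⟩ := toLex.surjective b
  rw [satB_toLex, show (0 : Bnd) = toLex (0, true) from rfl, Prod.Lex.toLex_le_toLex]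
  cases s <;> simp [le_iff_lt_or_eq, eq_comm]

lemma satB_neg_bndInv {d : ℝ} {b : Bnd} : satB (-d) (bndInv b) ↔ ¬ satB d b := by
  obtain ⟨⟨k, s⟩, rfl⟩ := toLex.surjective b
  change satB (-d) (toLex (-k, !s)) ↔ _
  rw [satB_toLex, satB_toLex]
  cases s <;> simp

section Semantics

variable {𝒟 : AbsDom C} {u : Minterm 𝒟} {v : C → ℝ}

lemma litVal_eq_true_iff_of_mem_mtSem (hsym : DomSym 𝒟) (hv : v ∈ mtSem 𝒟 u)
    {x y : Option C} {b : Bnd} (hb : b ∈ 𝒟 x y) :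
    litVal 𝒟 u x y b = true ↔ satB (val0 v x - val0 v y) b := by
  unfold litVal
  rcases lt_trichotomy x y with hxy | rfl | hyx
  · rw [dif_pos ⟨hxy, hb⟩]
    exact (hv.2 ⟨(x, y, b), hxy, hb⟩).symm
  · rw [dif_neg (fun h => lt_irrefl x h.1), dif_neg (fun h => lt_irrefl x h.1), sub_self,
      satB_zero_iff, decide_eq_true_iff]
  · have hinv : bndInv b ∈ 𝒟 y x := hsym x y ▸ Finset.mem_image_of_mem _ hb
    rw [dif_neg (fun h => lt_asymm hyx h.1), dif_pos ⟨hyx, hinv⟩, Bool.not_eq_true',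
      ← Bool.not_eq_true, ← (hv.2 ⟨(y, x, bndInv b), hyx, hinv⟩).not, ← neg_sub,
      satB_neg_bndInv, not_not]

theorem twoReduced_of_mem_mtSem (hsym : DomSym 𝒟) (hv : v ∈ mtSem 𝒟 u) :
    TwoReduced 𝒟 u := by
  have hlit := fun {x y b} (hb : b ∈ 𝒟 x y) => litVal_eq_true_iff_of_mem_mtSem hsym hv hb
  intro x y b hb hclosure
  rw [hlit hb]
  rcases hclosure with ⟨b', hb', hle, h⟩ | ⟨z, b₁, hb₁, b₂, hb₂, hle, h₁, h₂⟩
  · exact satB_mono hle ((hlit hb').mp h)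
  · have hsum := satB_add ((hlit hb₁).mp h₁) ((hlit hb₂).mp h₂)
    rw [sub_add_sub_cancel] at hsum
    exact satB_mono hle hsum

theorem mtSem_eq_empty_of_not_twoReduced (hsym : DomSym 𝒟) (hu : ¬ TwoReduced 𝒟 u) :
    mtSem 𝒟 u = ∅ :=
  Set.eq_empty_of_forall_notMem fun _ hv => hu (twoReduced_of_mem_mtSem hsym hv)

theorem setSem_sep_twoReduced (hsym : DomSym 𝒟) (S : Set (Minterm 𝒟)) :
    setSem 𝒟 {u ∈ S | TwoReduced 𝒟 u} = setSem 𝒟 S := by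
  refine Set.Subset.antisymm (Set.biUnion_mono (Set.sep_subset _ _) fun _ _ => le_rfl) ?_
  simp only [setSem, Set.iUnion_subset_iff]
  exact fun u hu v hv => Set.mem_biUnion ⟨hu, twoReduced_of_mem_mtSem hsym hv⟩ hv

end Semantics

/-- If a minterm is not 2-reduced then its semantics is empty; consequently the
semantics of a set of minterms equals the semantics of its 2-reduced part. -/
theorem not_two_reduced_semantics_empty {C : Type*} [LinearOrder (Option C)]
    (𝒟 : AbsDom C) (hsym : DomSym 𝒟) :
    (∀ u : Minterm 𝒟, ¬ TwoReduced 𝒟 u → mtSem 𝒟 u = ∅) ∧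
      ∀ S : Set (Minterm 𝒟), setSem 𝒟 S = setSem 𝒟 {u ∈ S | TwoReduced 𝒟 u} :=
  ⟨fun _ => mtSem_eq_empty_of_not_twoReduced hsym,
    fun S => (setSem_sep_twoReduced hsym S).symm⟩
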